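/- arXiv:2402.04899 — 4 statements merged into one kernel-verified Lean document; each statement's English description precedes it below -/
import Mathlib

section
/- For the staged progression system and any initial condition with S(0) > 0 and I(0) ≠ 0, the limit S∞ = lim_{t→∞} S(t) is strictly positive. -/
open Filter Topology

/-- The set of admissible infected-population vectors when the total population is `N`. -/
def stateSet (n : ℕ) (N : ℝ) : Set (Fin n → ℝ) :=
  {I | (∀ j, 0 ≤ I j) ∧ ∑ j, I j ≤ N}

/-- Hypothesis (H) on the incidence function `φ`: it is C², vanishes at `0`, takes values
in `[0,1)` on the admissible set, has nonnegative gradient there, its partial derivative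
with respect to the last class at `0` is positive, and it is concave (down). -/
def HypH (n : ℕ) (N : ℝ) (φ : (Fin n → ℝ) → ℝ) : Prop :=
  ContDiff ℝ 2 φ ∧ φ 0 = 0 ∧
  (∀ I ∈ stateSet n N, 0 ≤ φ I ∧ φ I < 1) ∧
  (∀ I ∈ stateSet n N, ∀ j, 0 ≤ fderiv ℝ φ I (Pi.single j 1)) ∧
  (∀ h : 0 < n, 0 < fderiv ℝ φ 0 (Pi.single (⟨n - 1, Nat.sub_lt h Nat.one_pos⟩ : Fin n) 1)) ∧
  ConcaveOn ℝ (stateSet n N) φ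

/-- The discrete-time staged progression epidemic system:
`S(t+1) = (1−φ(I(t)))S(t)`, `I₁(t+1) = (1−γ₁)I₁(t) + φ(I(t))S(t)`,
`Iⱼ(t+1) = (1−γⱼ)Iⱼ(t) + γⱼ₋₁Iⱼ₋₁(t)` for `2 ≤ j ≤ n`. -/
def SPSystem {n : ℕ} (γ : Fin n → ℝ) (φ : (Fin n → ℝ) → ℝ)
    (S : ℕ → ℝ) (I : ℕ → Fin n → ℝ) : Prop :=
  (∀ t, S (t + 1) = (1 - φ (I t)) * S t) ∧
  (∀ t, ∀ h0 : 0 < n, I (t + 1) ⟨0, h0⟩ = (1 - γ ⟨0, h0⟩) * I t ⟨0, h0⟩ + φ (I t) * S t) ∧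
  (∀ t, ∀ j : Fin n, ∀ h : j.val + 1 < n,
    I (t + 1) ⟨j.val + 1, h⟩ = (1 - γ ⟨j.val + 1, h⟩) * I t ⟨j.val + 1, h⟩ + γ j * I t j)

/-- Admissible initial condition: `S(0) > 0`, `I(0) ≥ 0`, `I(0) ≠ 0`, `S(0)+‖I(0)‖₁ ≤ N`. -/
def AdmissibleIC {n : ℕ} (N : ℝ) (S : ℕ → ℝ) (I : ℕ → Fin n → ℝ) : Prop :=
  0 < S 0 ∧ (∀ j, 0 ≤ I 0 j) ∧ I 0 ≠ 0 ∧ S 0 + ∑ j, I 0 j ≤ N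

/-! The mass of `S` and the first `k + 1` infected classes loses exactly `γₖ Iₖ(t)` per step, so
it stays nonnegative and telescoping bounds `∑ₜ Iₖ(t)` for every class. Concavity puts `φ` below
its linearization at `0`, hence `∑ₜ φ(I(t)) < ∞`. Since `S(t+1) = (1 - φ(I(t))) S(t)`, once the
tail of that series is below `1/2` the Weierstrass inequality `∏ (1 - xᵢ) ≥ 1 - ∑ xᵢ` keeps `S`
above half its value there. -/

theorem ConcaveOn.le_add_fderiv {E : Type*} [NormedAddCommGroup E] [NormedSpace ℝ E]
    {s : Set E} {f : E → ℝ} (hf : ConcaveOn ℝ s f) {x y : E} (hx : x ∈ s) (hy : y ∈ s)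
    (hfx : DifferentiableAt ℝ f x) : f y ≤ f x + fderiv ℝ f x (y - x) := by
  let g : ℝ →ᵃ[ℝ] E := AffineMap.lineMap x y
  have hline : ConcaveOn ℝ (g ⁻¹' s) (f ∘ g) := hf.comp_affineMap g
  have hderiv : HasDerivAt (f ∘ g) (fderiv ℝ f x (y - x)) 0 :=
    hfx.hasFDerivAt.comp_hasDerivAt_of_eq 0 AffineMap.hasDerivAt_lineMap (by simp [g])
  have := hline.slope_le_of_hasDerivAt (x := 0) (y := 1) (by simpa [g]) (by simpa [g]) one_pos
    hderiv
  simpa [g, slope_def_field, add_comm] using this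

theorem pos_of_tendsto_of_succ_eq_one_sub_mul {S x : ℕ → ℝ} {L : ℝ}
    (hS : ∀ t, S (t + 1) = (1 - x t) * S t) (hx0 : ∀ t, 0 ≤ x t) (hx1 : ∀ t, x t < 1)
    (hS0 : 0 < S 0) (hx : Summable x) (hL : Tendsto S atTop (𝓝 L)) : 0 < L := by
  have hpos : ∀ t, 0 < S t := by
    intro t
    induction t with
    | zero => exact hS0
    | succ t ih => rw [hS]; exact mul_pos (by linarith [hx1 t]) ih
  have hweierstrass : ∀ T k, S T * (1 - ∑ i ∈ Finset.range k, x (T + i)) ≤ S (T + k) := by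
    intro T k
    induction k with
    | zero => simp
    | succ k ih =>
      have hσ : 0 ≤ ∑ i ∈ Finset.range k, x (T + i) := Finset.sum_nonneg fun i _ => hx0 _
      rw [Finset.sum_range_succ, ← add_assoc, hS]
      calc S T * (1 - (∑ i ∈ Finset.range k, x (T + i) + x (T + k)))
          ≤ (1 - x (T + k)) * (S T * (1 - ∑ i ∈ Finset.range k, x (T + i))) := by
            nlinarith [mul_nonneg (mul_nonneg (hpos T).le (hx0 (T + k))) hσ]
        _ ≤ (1 - x (T + k)) * S (T + k) :=
            mul_le_mul_of_nonneg_left ih (by linarith [hx1 (T + k)])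
  obtain ⟨T, hT⟩ : ∃ T, ∑' i, x (i + T) ≤ 1 / 2 :=
    ((tendsto_sum_nat_add x).eventually (eventually_le_nhds one_half_pos)).exists
  have hhalf : ∀ k, S T / 2 ≤ S (T + k) := fun k => by
    have := (summable_nat_add_iff T).2 hx |>.sum_le_tsum (Finset.range k) fun i _ => hx0 _
    simp only [add_comm _ T] at this hT
    nlinarith [hweierstrass T k, hpos T]
  have : S T / 2 ≤ L := ge_of_tendsto hL <| (eventually_ge_atTop T).mono fun t ht => by
    simpa [Nat.add_sub_cancel' ht] using hhalf (t - T)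
  linarith [hpos T]

section StagedProgression

open Finset

variable {n : ℕ} {γ : Fin n → ℝ} {φ : (Fin n → ℝ) → ℝ} {S : ℕ → ℝ} {I : ℕ → Fin n → ℝ}

-- The mass in `S` and in the first `k` infected classes; indices `≥ n` contribute `0`.
def prefixMass (S : ℕ → ℝ) (I : ℕ → Fin n → ℝ) (k t : ℕ) : ℝ :=
  S t + ∑ i ∈ range k, if h : i < n then I t ⟨i, h⟩ else 0

theorem prefixMass_zero (t : ℕ) : prefixMass S I 0 t = S t := by
  simp [prefixMass]

theorem prefixMass_succ (k : ℕ) (hk : k < n) (t : ℕ) :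
    prefixMass S I (k + 1) t = prefixMass S I k t + I t ⟨k, hk⟩ := by
  simp [prefixMass, sum_range_succ, hk, add_assoc]

theorem prefixMass_self (t : ℕ) : prefixMass S I n t = S t + ∑ j, I t j := by
  simp [prefixMass, ← Fin.sum_univ_eq_sum_range (fun i => if h : i < n then I t ⟨i, h⟩ else 0)]

theorem prefixMass_nonneg {t : ℕ} (hS : 0 ≤ S t) (hI : ∀ j, 0 ≤ I t j) (k : ℕ) :
    0 ≤ prefixMass S I k t :=
  add_nonneg hS <| sum_nonneg fun i _ => by split_ifs <;> simp [hI]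

namespace SPSystem

theorem prefixMass_succ_time (hsys : SPSystem γ φ S I) (k : ℕ) (hk : k < n) (t : ℕ) :
    prefixMass S I (k + 1) (t + 1) = prefixMass S I (k + 1) t - γ ⟨k, hk⟩ * I t ⟨k, hk⟩ := by
  induction k with
  | zero =>
    rw [prefixMass_succ 0 hk, prefixMass_succ 0 hk, prefixMass_zero, prefixMass_zero, hsys.1 t,
      hsys.2.1 t hk]
    ring
  | succ k ih =>
    rw [prefixMass_succ _ hk, prefixMass_succ _ hk, ih (by omega), hsys.2.2 t ⟨k, by omega⟩ hk]
    ring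

theorem nonneg_succ (hsys : SPSystem γ φ S I) (hγ : ∀ j, γ j ∈ Set.Icc 0 1) {t : ℕ}
    (hS : 0 ≤ S t) (hφ : 0 ≤ φ (I t)) (hI : ∀ j, 0 ≤ I t j) (j : Fin n) : 0 ≤ I (t + 1) j := by
  have hγ₁ : ∀ j, 0 ≤ 1 - γ j := fun j => sub_nonneg.2 (hγ j).2
  obtain ⟨_ | k, hk⟩ := j
  · rw [hsys.2.1 t hk]
    exact add_nonneg (mul_nonneg (hγ₁ _) (hI _)) (mul_nonneg hφ hS)
  · rw [hsys.2.2 t ⟨k, by omega⟩ hk]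
    exact add_nonneg (mul_nonneg (hγ₁ _) (hI _)) (mul_nonneg (hγ _).1 (hI _))

theorem invariant (hsys : SPSystem γ φ S I) (hn : 0 < n) {N : ℝ}
    (hγ : ∀ j, γ j ∈ Set.Icc 0 1) (hφ : ∀ x ∈ stateSet n N, 0 ≤ φ x ∧ φ x < 1)
    (hic : AdmissibleIC N S I) (t : ℕ) :
    0 < S t ∧ (∀ j, 0 ≤ I t j) ∧ S t + ∑ j, I t j ≤ N := by
  induction t with
  | zero => exact ⟨hic.1, hic.2.1, hic.2.2.2⟩
  | succ t ih =>
    obtain ⟨hS, hI, hmass⟩ := ih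
    have hφt := hφ (I t) ⟨hI, by linarith⟩
    refine ⟨?_, hsys.nonneg_succ hγ hS.le hφt.1 hI, ?_⟩
    · rw [hsys.1 t]
      exact mul_pos (by linarith [hφt.2]) hS
    · obtain ⟨m, rfl⟩ : ∃ m, n = m + 1 := ⟨n - 1, by omega⟩
      rw [← prefixMass_self, hsys.prefixMass_succ_time m (by omega)]
      rw [← prefixMass_self] at hmass
      linarith [mul_nonneg (hγ ⟨m, by omega⟩).1 (hI ⟨m, by omega⟩)]

theorem summable_apply (hsys : SPSystem γ φ S I) (hγ : ∀ j, 0 < γ j) (hS : ∀ t, 0 ≤ S t)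
    (hI : ∀ t j, 0 ≤ I t j) (j : Fin n) : Summable fun t => I t j := by
  obtain ⟨k, hk⟩ := j
  refine summable_of_sum_range_le (c := prefixMass S I (k + 1) 0 / γ ⟨k, hk⟩)
    (fun t => hI t _) fun T => ?_
  have htelescope : ∑ t ∈ range T, γ ⟨k, hk⟩ * I t ⟨k, hk⟩ =
      prefixMass S I (k + 1) 0 - prefixMass S I (k + 1) T := by
    rw [← sum_range_sub' (prefixMass S I (k + 1))]
    exact sum_congr rfl fun t _ => by rw [hsys.prefixMass_succ_time k hk]; ring
  rw [le_div_iff₀ (hγ _), mul_comm, mul_sum, htelescope]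
  linarith [prefixMass_nonneg (hS T) (hI T) (k + 1)]

end SPSystem

end StagedProgression

/-- the limit `S∞` of the susceptible population is strictly positive. -/
theorem sp_Sinf_pos
    (n : ℕ) (hn : 0 < n) (N : ℝ) (hN : 0 < N)
    (γ : Fin n → ℝ) (hγ : ∀ j, γ j ∈ Set.Ioo (0 : ℝ) 1)
    (φ : (Fin n → ℝ) → ℝ) (hφ : HypH n N φ)
    (S : ℕ → ℝ) (I : ℕ → Fin n → ℝ)
    (hsys : SPSystem γ φ S I) (hic : AdmissibleIC N S I)
    (Sinf : ℝ) (hSinf : Filter.Tendsto S Filter.atTop (nhds Sinf)) :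
    0 < Sinf := by
  obtain ⟨hC, hφ0, hrange, -, -, hconc⟩ := hφ
  have hinv := hsys.invariant hn (fun j => Set.Ioo_subset_Icc_self (hγ j)) hrange hic
  have hstate : ∀ t, I t ∈ stateSet n N := fun t =>
    ⟨(hinv t).2.1, by linarith [(hinv t).1, (hinv t).2.2]⟩
  have hI : Summable I := Pi.summable.2 <|
    hsys.summable_apply (fun j => (hγ j).1) (fun t => (hinv t).1.le) fun t => (hinv t).2.1
  have hφI : Summable fun t => φ (I t) := by
    refine ((fderiv ℝ φ 0).summable hI).of_nonneg_of_le (fun t => (hrange _ (hstate t)).1)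
      fun t => ?_
    have h0 : (0 : Fin n → ℝ) ∈ stateSet n N := ⟨fun _ => le_rfl, by simp [hN.le]⟩
    simpa [hφ0] using hconc.le_add_fderiv h0 (hstate t) (hC.differentiable two_ne_zero 0)
  exact pos_of_tendsto_of_succ_eq_one_sub_mul hsys.1 (fun t => (hrange _ (hstate t)).1)
    (fun t => (hrange _ (hstate t)).2) hic.1 hφI hSinf
end

section
/- Let v > 0 be the Perron right eigenvector of B(a) = T + F(a) with eigenvalue λ = ρ(B(a)). Then for all i < j in {1,…,n}: sign(λ − 1) = sign(γᵢvᵢ − γⱼvⱼ) = sign(a·(r·v) − γ₁v₁). -/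
/-!
Row `0` of `B v = λ v` reads `a (r·v) - γ₀ v₀ = (λ - 1) v₀`, and row `j + 1` reads
`γⱼ vⱼ - γⱼ₊₁ vⱼ₊₁ = (λ - 1) vⱼ₊₁`. Telescoping the latter gives
`γᵢ vᵢ - γⱼ vⱼ = (λ - 1) (vᵢ₊₁ + ⋯ + vⱼ)`, and since `v > 0` every quantity in the
statement is `λ - 1` times a positive number.
-/

/-- The spectral radius of a real matrix: the supremum of the moduli of its complex
eigenvalues. -/
noncomputable def specRad {n : ℕ} (M : Matrix (Fin n) (Fin n) ℝ) : ℝ :=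
  sSup ((fun z : ℂ => ‖z‖) '' spectrum ℂ (M.map (fun x => (x : ℂ))))

theorem Real.sign_mul_of_pos (t : ℝ) {s : ℝ} (hs : 0 < s) :
    Real.sign (t * s) = Real.sign t := by
  rcases lt_trichotomy t 0 with ht | rfl | ht
  · rw [Real.sign_of_neg ht, Real.sign_of_neg (mul_neg_of_neg_of_pos ht hs)]
  · rw [zero_mul]
  · rw [Real.sign_of_pos ht, Real.sign_of_pos (mul_pos ht hs)]

theorem Fin.exists_pos_sub_eq_mul_of_succ {n : ℕ} {f w : Fin n → ℝ} (t : ℝ)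
    (hw : ∀ j, 0 < w j) (hstep : ∀ i j : Fin n, j.val = i.val + 1 → f i - f j = t * w j) :
    ∀ i j : Fin n, i < j → ∃ S, 0 < S ∧ f i - f j = t * S := by
  suffices ∀ d : ℕ, ∀ i j : Fin n, j.val = i.val + d + 1 → ∃ S, 0 < S ∧ f i - f j = t * S from
    fun i j hij => this (j.val - i.val - 1) i j (by omega)
  intro d
  induction d with
  | zero => exact fun i j hij => ⟨w j, hw j, hstep i j hij⟩
  | succ d ih =>
    intro i j hij
    obtain ⟨S, hS, hfm⟩ := ih i ⟨i.val + d + 1, by omega⟩ rfl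
    have hmj := hstep ⟨i.val + d + 1, by omega⟩ j (by simp only; omega)
    exact ⟨S + w j, add_pos hS (hw j), by rw [mul_add, ← hfm, ← hmj]; ring⟩

/-- The paper's `B(a) = T + F(a)`: `T` is the lower bidiagonal part, `F(a)` the first row `a r`. -/
def bidiagAddFirstRow {n : ℕ} (a : ℝ) (γ r : Fin n → ℝ) : Matrix (Fin n) (Fin n) ℝ :=
  fun i j => (if i = j then 1 - γ j else 0) + (if i.val = j.val + 1 then γ j else 0) +
    (if i.val = 0 then a * r j else 0)

section bidiagAddFirstRow

variable {n : ℕ} (a : ℝ) (γ r v : Fin n → ℝ)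

theorem bidiagAddFirstRow_mulVec_zero (hn : 0 < n) :
    ((bidiagAddFirstRow a γ r).mulVec v) ⟨0, hn⟩ =
      (1 - γ ⟨0, hn⟩) * v ⟨0, hn⟩ + a * ∑ k, r k * v k := by
  have hsub : ∀ k : Fin n, ¬ (0 = k.val + 1) := fun k => by omega
  simp only [Matrix.mulVec, dotProduct, bidiagAddFirstRow, hsub, if_true, if_false, add_zero,
    add_mul, ite_mul, zero_mul, Finset.sum_add_distrib, Finset.sum_ite_eq, Finset.mem_univ,
    Finset.mul_sum, mul_assoc]

theorem bidiagAddFirstRow_mulVec_of_val_eq_succ {i j : Fin n} (hij : j.val = i.val + 1) :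
    ((bidiagAddFirstRow a γ r).mulVec v) j = γ i * v i + (1 - γ j) * v j := by
  have hsub : ∀ k : Fin n, j.val = k.val + 1 ↔ k = i := fun k => by rw [Fin.ext_iff]; omega
  have hj0 : j.val ≠ 0 := by omega
  simp only [Matrix.mulVec, dotProduct, bidiagAddFirstRow, hsub, hj0, if_false, add_zero,
    add_mul, ite_mul, zero_mul, Finset.sum_add_distrib, Finset.sum_ite_eq, Finset.sum_ite_eq',
    Finset.mem_univ, if_true]
  ring

end bidiagAddFirstRow

theorem perron_eigenvector_signs_general
    (n : ℕ) (hn : 0 < n) (a lam : ℝ)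
    (γ r v : Fin n → ℝ)
    (B : Matrix (Fin n) (Fin n) ℝ)
    (hB : ∀ i j : Fin n, B i j =
      (if i = j then 1 - γ j else 0) + (if i.val = j.val + 1 then γ j else 0) +
        (if i.val = 0 then a * r j else 0))
    (hv : ∀ j, 0 < v j) (heig : B.mulVec v = lam • v) :
    ∀ i j : Fin n, i < j →
      Real.sign (lam - 1) = Real.sign (γ i * v i - γ j * v j) ∧
      Real.sign (lam - 1) =
        Real.sign (a * (∑ k, r k * v k) - γ ⟨0, hn⟩ * v ⟨0, hn⟩) := by
  obtain rfl : B = bidiagAddFirstRow a γ r := Matrix.ext hB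
  have hrow (i : Fin n) : (bidiagAddFirstRow a γ r).mulVec v i = lam * v i :=
    congrFun heig i
  have hrow_zero : a * (∑ k, r k * v k) - γ ⟨0, hn⟩ * v ⟨0, hn⟩ = (lam - 1) * v ⟨0, hn⟩ := by
    have := hrow ⟨0, hn⟩
    rw [bidiagAddFirstRow_mulVec_zero] at this
    linarith
  have hrow_succ (i j : Fin n) (hij : j.val = i.val + 1) :
      γ i * v i - γ j * v j = (lam - 1) * v j := by
    have := hrow j
    rw [bidiagAddFirstRow_mulVec_of_val_eq_succ a γ r v hij] at this
    linarith
  intro i j hij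
  obtain ⟨S, hS, hγv⟩ := Fin.exists_pos_sub_eq_mul_of_succ (lam - 1) hv hrow_succ i j hij
  exact ⟨by rw [hγv, Real.sign_mul_of_pos _ hS],
    by rw [hrow_zero, Real.sign_mul_of_pos _ (hv _)]⟩

/-- if `v > 0` is the Perron right eigenvector of `B(a) = T + F(a)` with
eigenvalue `λ = ρ(B(a))`, then for all `i < j`,
`sign(λ−1) = sign(γᵢvᵢ − γⱼvⱼ) = sign(a(r·v) − γ₁v₁)`. -/
theorem perron_eigenvector_signs
    (n : ℕ) (hn : 0 < n) (a lam : ℝ) (ha : 0 < a)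
    (γ r v : Fin n → ℝ) (hγ : ∀ j, γ j ∈ Set.Ioo (0 : ℝ) 1)
    (hr : ∀ j, 0 ≤ r j) (hrn : 0 < r ⟨n - 1, Nat.sub_lt hn Nat.one_pos⟩)
    (B : Matrix (Fin n) (Fin n) ℝ)
    (hB : ∀ i j : Fin n, B i j =
      (if i = j then 1 - γ j else 0) + (if i.val = j.val + 1 then γ j else 0) +
        (if i.val = 0 then a * r j else 0))
    (hv : ∀ j, 0 < v j) (heig : B.mulVec v = lam • v) (hlam : lam = specRad B) :
    ∀ i j : Fin n, i < j →
      Real.sign (lam - 1) = Real.sign (γ i * v i - γ j * v j) ∧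
      Real.sign (lam - 1) =
        Real.sign (a * (∑ k, r k * v k) - γ ⟨0, hn⟩ * v ⟨0, hn⟩) :=
  perron_eigenvector_signs_general n hn a lam γ r v B hB hv heig
end

section
/- (Final size equation, exponential incidence.) For the staged progression system with φ(I) = 1 − exp(−∑ⱼ βⱼIⱼ), βⱼ ≥ 0, βₙ > 0, and admissible initial condition, S∞ satisfies log(S(0)/S∞) = ∑_{j=1}^n (βⱼ/γⱼ)(S(0) + ∑_{i=1}^{j} Iᵢ(0)) − R₀·S∞/N, where R₀ = N∑ⱼ βⱼ/γⱼ. Moreover this is the unique solution of that equation in (0, S(0)), and S∞ < N/R₀. -/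
open Filter Topology

/-!
Summing the recursions, `S + I₁ + ⋯ + Iⱼ` loses exactly `γⱼ Iⱼ` per step, so
`∑ₜ Iⱼ(t) = (S(0) + ∑_{i ≤ j} Iᵢ(0) − S∞) / γⱼ`. For exponential incidence
`S(T) = S(0) exp(−∑_{t < T} ∑ⱼ βⱼ Iⱼ(t))`, so `log (S(0)/S∞) = ∑ⱼ βⱼ ∑ₜ Iⱼ(t)`, which is the
final size equation `log (S(0)/y) = A − c y` with `c = R₀/N`. Since `c S(0) < A`, every root
`y ∈ (0, S(0))` has `c y < 1`, and `y ↦ log y − c y` is strictly increasing on `{c y ≤ 1}`: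
the root is unique and `S∞ < 1/c = N/R₀`.
-/

open Finset Real

lemma Fin.Iic_mk_zero {n : ℕ} (h : 0 < n) : Iic (⟨0, h⟩ : Fin n) = {⟨0, h⟩} := by
  ext ⟨i, hi⟩
  simp only [mem_Iic, mem_singleton, Fin.le_def, Fin.mk.injEq]
  omega

lemma Fin.Iic_mk_succ {n m : ℕ} (h : m + 1 < n) :
    Iic (⟨m + 1, h⟩ : Fin n) = insert ⟨m + 1, h⟩ (Iic ⟨m, by omega⟩) := by
  ext ⟨i, hi⟩
  simp only [mem_Iic, mem_insert, Fin.le_def, Fin.mk.injEq]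
  omega

lemma sum_mul_lt_sum_mul_add {ι : Type*} [Fintype ι] {w p : ι → ℝ} (s : ℝ)
    (hw : ∀ i, 0 ≤ w i) (hp : ∀ i, 0 ≤ p i) {i₀ : ι} (hw₀ : 0 < w i₀) (hp₀ : 0 < p i₀) :
    (∑ i, w i) * s < ∑ i, w i * (s + p i) :=
  calc (∑ i, w i) * s < (∑ i, w i) * s + w i₀ * p i₀ := lt_add_of_pos_right _ (mul_pos hw₀ hp₀)
    _ ≤ (∑ i, w i) * s + ∑ i, w i * p i := by
      gcongr
      exact single_le_sum (fun i _ => mul_nonneg (hw i) (hp i)) (mem_univ i₀)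
    _ = ∑ i, w i * (s + p i) := by simp only [sum_mul, mul_add, sum_add_distrib]

lemma one_sub_exp_neg_sum_mem_Icc {n : ℕ} {β J : Fin n → ℝ} (hβ : ∀ j, 0 ≤ β j) (hJ : 0 ≤ J) :
    1 - exp (-(∑ j, β j * J j)) ∈ Set.Icc 0 1 := by
  have : 0 ≤ ∑ j, β j * J j := sum_nonneg fun j _ => mul_nonneg (hβ j) (hJ j)
  constructor <;> linarith [exp_le_one_iff.2 (neg_nonpos.2 this), exp_pos (-(∑ j, β j * J j))]

section FinalSizeEquation

variable {s c A : ℝ}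

/-- On `y ∈ (0, s)` with `c * y ≥ 1` one has `log (s / y) < s / y - 1 ≤ c * (s - y) < A - c * y`. -/
lemma mul_lt_one_of_log_div_eq {y : ℝ} (hy : 0 < y) (hys : y < s) (hA : c * s < A)
    (h : log (s / y) = A - c * y) : c * y < 1 := by
  by_contra! hcy
  have hlog : log (s / y) < s / y - 1 :=
    log_lt_sub_one_of_pos (div_pos (hy.trans hys) hy) (one_lt_div hy |>.2 hys).ne'
  have hbound : s / y - 1 ≤ c * (s - y) := by
    rw [div_sub_one hy.ne', div_le_iff₀ hy]
    nlinarith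
  linarith

lemma strictMonoOn_log_sub_mul (c : ℝ) :
    StrictMonoOn (fun y => log y - c * y) {y | 0 < y ∧ c * y ≤ 1} := by
  rintro u ⟨hu, -⟩ v ⟨hv, hcv⟩ huv
  have hlog : log (u / v) < u / v - 1 :=
    log_lt_sub_one_of_pos (div_pos hu hv) ((div_lt_one hv).2 huv).ne
  have hbound : c * v - c * u ≤ (v - u) / v := by
    rw [le_div_iff₀ hv]
    nlinarith
  rw [log_div hu.ne' hv.ne', div_sub_one hv.ne'] at hlog
  have : (u - v) / v = -((v - u) / v) := by ring
  linarith

lemma eq_of_log_div_eq_sub_mul {x y : ℝ} (hA : c * s < A) (hx : x ∈ Set.Ioo 0 s)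
    (hy : y ∈ Set.Ioo 0 s) (hxe : log (s / x) = A - c * x) (hye : log (s / y) = A - c * y) :
    x = y := by
  refine (strictMonoOn_log_sub_mul c).injOn
    ⟨hx.1, (mul_lt_one_of_log_div_eq hx.1 hx.2 hA hxe).le⟩
    ⟨hy.1, (mul_lt_one_of_log_div_eq hy.1 hy.2 hA hye).le⟩ ?_
  have hs : 0 < s := hx.1.trans hx.2
  rw [log_div hs.ne' hx.1.ne'] at hxe
  rw [log_div hs.ne' hy.1.ne'] at hye
  linarith

end FinalSizeEquation

namespace SPSystem

variable {n : ℕ} {γ : Fin n → ℝ} {φ : (Fin n → ℝ) → ℝ} {S : ℕ → ℝ} {I : ℕ → Fin n → ℝ}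

lemma eq_mul_prod_range (h : SPSystem γ φ S I) (T : ℕ) :
    S T = S 0 * ∏ t ∈ range T, (1 - φ (I t)) := by
  induction T with
  | zero => simp
  | succ T ih => rw [h.1, ih, prod_range_succ]; ring

lemma add_sum_Iic_succ (h : SPSystem γ φ S I) (j : Fin n) (t : ℕ) :
    S (t + 1) + ∑ i ∈ Iic j, I (t + 1) i = S t + ∑ i ∈ Iic j, I t i - γ j * I t j := by
  obtain ⟨hS, hI₁, hI⟩ := h
  obtain ⟨m, hm⟩ := j
  induction m with
  | zero =>
    rw [Fin.Iic_mk_zero, sum_singleton, sum_singleton, hS, hI₁]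
    ring
  | succ m ih =>
    have hnot : (⟨m + 1, hm⟩ : Fin n) ∉ Iic ⟨m, by omega⟩ := by simp [Fin.le_def]
    rw [Fin.Iic_mk_succ, sum_insert hnot, sum_insert hnot, hI t ⟨m, by omega⟩ hm]
    linarith [ih (by omega)]

lemma gamma_mul_sum_range (h : SPSystem γ φ S I) (j : Fin n) (T : ℕ) :
    γ j * ∑ t ∈ range T, I t j =
      S 0 + ∑ i ∈ Iic j, I 0 i - (S T + ∑ i ∈ Iic j, I T i) := by
  rw [mul_sum, ← sum_range_sub' (fun t => S t + ∑ i ∈ Iic j, I t i)]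
  refine sum_congr rfl fun t _ => ?_
  linarith [h.add_sum_Iic_succ j t]

lemma nonneg (h : SPSystem γ φ S I) (hγ : ∀ j, γ j ∈ Set.Icc 0 1)
    (hφ : ∀ J, 0 ≤ J → φ J ∈ Set.Icc 0 1) (hS₀ : 0 ≤ S 0) (hI₀ : 0 ≤ I 0) (t : ℕ) :
    0 ≤ S t ∧ 0 ≤ I t := by
  obtain ⟨hS, hI₁, hI⟩ := h
  induction t with
  | zero => exact ⟨hS₀, hI₀⟩
  | succ t ih =>
    obtain ⟨hφ₀, hφ₁⟩ := hφ _ ih.2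
    refine ⟨hS t ▸ mul_nonneg (sub_nonneg.2 hφ₁) ih.1, ?_⟩
    rintro ⟨_ | m, hm⟩
    · rw [hI₁ t hm]
      exact add_nonneg (mul_nonneg (sub_nonneg.2 (hγ _).2) (ih.2 _)) (mul_nonneg hφ₀ ih.1)
    · rw [hI t ⟨m, by omega⟩ hm]
      exact add_nonneg (mul_nonneg (sub_nonneg.2 (hγ _).2) (ih.2 _))
        (mul_nonneg (hγ _).1 (ih.2 _))

lemma pos_of_le (h : SPSystem γ φ S I) (hγ : ∀ j, γ j ∈ Set.Ioc 0 1)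
    (hI : ∀ t, 0 ≤ I t) {k j : Fin n} (hk : 0 < I 0 k) (hkj : k ≤ j) :
    0 < I (j - k : ℕ) j := by
  suffices key : ∀ m (hm : k + m < n), 0 < I m ⟨k + m, hm⟩ by
    convert key (j - k) (by omega) using 2
    ext
    simp only
    omega
  intro m
  induction m with
  | zero => exact fun _ => hk
  | succ m ih =>
    intro hm
    have hm' : k + m + 1 < n := by omega
    change 0 < I (m + 1) ⟨(⟨k + m, by omega⟩ : Fin n).val + 1, hm'⟩
    rw [h.2.2 m ⟨k + m, by omega⟩ hm']
    exact add_pos_of_nonneg_of_pos (mul_nonneg (sub_nonneg.2 (hγ _).2) (hI m _))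
      (mul_pos (hγ _).1 (ih (by omega)))

lemma sum_mul_pos_of_le (h : SPSystem γ φ S I) (hγ : ∀ j, γ j ∈ Set.Ioc 0 1)
    (hI : ∀ t, 0 ≤ I t) {β : Fin n → ℝ} (hβ : ∀ j, 0 ≤ β j) {k j : Fin n} (hβj : 0 < β j)
    (hk : 0 < I 0 k) (hkj : k ≤ j) : 0 < ∑ i, β i * I (j - k : ℕ) i :=
  (mul_pos hβj (h.pos_of_le hγ hI hk hkj)).trans_le
    (single_le_sum (fun i _ => mul_nonneg (hβ i) (hI _ i)) (mem_univ j))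

section Limits

variable (h : SPSystem γ φ S I) (hγ : ∀ j, 0 < γ j) (hnn : ∀ t, 0 ≤ S t ∧ 0 ≤ I t)
include h hγ hnn

lemma summable_infected (j : Fin n) : Summable fun t => I t j := by
  refine summable_of_sum_range_le (c := (S 0 + ∑ i ∈ Iic j, I 0 i) / γ j)
    (fun t => (hnn t).2 j) fun T => ?_
  rw [le_div_iff₀' (hγ j), h.gamma_mul_sum_range j T]
  linarith [(hnn T).1, sum_nonneg fun i (_ : i ∈ Iic j) => (hnn T).2 i]

variable {Sinf : ℝ} (hS : Tendsto S atTop (𝓝 Sinf))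
include hS

lemma hasSum_infected (j : Fin n) :
    HasSum (fun t => I t j) ((S 0 + ∑ i ∈ Iic j, I 0 i - Sinf) / γ j) := by
  refine (hasSum_iff_tendsto_nat_of_nonneg (fun t => (hnn t).2 j) _).2 ?_
  have hsum : ∀ T, ∑ t ∈ range T, I t j =
      (S 0 + ∑ i ∈ Iic j, I 0 i - (S T + ∑ i ∈ Iic j, I T i)) / γ j := fun T => by
    rw [← h.gamma_mul_sum_range, mul_div_cancel_left₀ _ (hγ j).ne']
  have hP : Tendsto (fun T => ∑ i ∈ Iic j, I T i) atTop (𝓝 0) := by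
    simpa using tendsto_finsetSum (Iic j) fun i _ =>
      (summable_infected h hγ hnn i).tendsto_atTop_zero
  simp only [hsum]
  simpa using ((tendsto_const_nhds.sub (hS.add hP)).div_const (γ j))

lemma hasSum_weighted_infected (β : Fin n → ℝ) :
    HasSum (fun t => ∑ j, β j * I t j)
      (∑ j, β j / γ j * (S 0 + ∑ i ∈ Iic j, I 0 i) - (∑ j, β j / γ j) * Sinf) := by
  have hval : ∑ j, β j / γ j * (S 0 + ∑ i ∈ Iic j, I 0 i) - (∑ j, β j / γ j) * Sinf =
      ∑ j, β j * ((S 0 + ∑ i ∈ Iic j, I 0 i - Sinf) / γ j) := by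
    rw [sum_mul, ← sum_sub_distrib]
    exact sum_congr rfl fun j _ => by ring
  rw [hval]
  exact hasSum_sum fun j _ => (hasSum_infected h hγ hnn hS j).mul_left (β j)

end Limits

lemma tendsto_mul_exp {L : (Fin n → ℝ) → ℝ} {X : ℝ}
    (h : SPSystem γ (fun J => 1 - exp (-L J)) S I) (hL : HasSum (fun t => L (I t)) X) :
    Tendsto S atTop (𝓝 (S 0 * exp (-X))) := by
  have hS : ∀ T, S T = S 0 * exp (-∑ t ∈ range T, L (I t)) := fun T => by
    rw [h.eq_mul_prod_range, ← sum_neg_distrib, exp_sum]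
    simp
  rw [tendsto_congr hS]
  exact ((continuous_exp.tendsto _).comp hL.tendsto_sum_nat.neg).const_mul _

end SPSystem

/-- final size equation for exponential incidence:
with `φ(I) = 1 − exp(−∑ⱼ βⱼIⱼ)`, the limit `S∞` lies in `(0, S(0))`, satisfies
`log(S(0)/S∞) = ∑ⱼ (βⱼ/γⱼ)(S(0) + ∑_{i≤j} Iᵢ(0)) − R₀ S∞/N`, is the unique solution of
that equation in `(0, S(0))`, and `S∞ < N/R₀`. -/
theorem sp_final_size_equation_exponential
    (n : ℕ) (hn : 0 < n) (N : ℝ) (hN : 0 < N)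
    (γ β : Fin n → ℝ) (hγ : ∀ j, γ j ∈ Set.Ioo (0 : ℝ) 1)
    (hβ : ∀ j, 0 ≤ β j) (hβn : 0 < β ⟨n - 1, Nat.sub_lt hn Nat.one_pos⟩)
    (φ : (Fin n → ℝ) → ℝ) (hφ : φ = fun I => 1 - Real.exp (-(∑ j, β j * I j)))
    (S : ℕ → ℝ) (I : ℕ → Fin n → ℝ)
    (hsys : SPSystem γ φ S I) (hic : AdmissibleIC N S I)
    (Sinf : ℝ) (hSinf : Filter.Tendsto S Filter.atTop (nhds Sinf))
    (R0 : ℝ) (hR0 : R0 = N * ∑ j, β j / γ j) :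
    Sinf ∈ Set.Ioo 0 (S 0) ∧
    Real.log (S 0 / Sinf) =
      (∑ j, (β j / γ j) * (S 0 + ∑ i ∈ Finset.Iic j, I 0 i)) - R0 * Sinf / N ∧
    (∀ x ∈ Set.Ioo (0 : ℝ) (S 0),
      Real.log (S 0 / x) =
        (∑ j, (β j / γ j) * (S 0 + ∑ i ∈ Finset.Iic j, I 0 i)) - R0 * x / N → x = Sinf) ∧
    Sinf < N / R0 := by
  subst hφ
  obtain ⟨hS₀, hI₀, hI₀ne, -⟩ := hic
  obtain ⟨-, k, hk⟩ := Pi.lt_def.1 ((show 0 ≤ I 0 from hI₀).lt_of_ne' hI₀ne)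
  set last : Fin n := ⟨n - 1, Nat.sub_lt hn Nat.one_pos⟩
  have hk_last : k ≤ last := Fin.le_def.2 (by simp only [last]; omega)
  set c := ∑ j, β j / γ j
  set A := ∑ j, β j / γ j * (S 0 + ∑ i ∈ Iic j, I 0 i)
  have hnn := hsys.nonneg (fun j => Set.Ioo_subset_Icc_self (hγ j))
    (fun J hJ => one_sub_exp_neg_sum_mem_Icc hβ hJ) hS₀.le hI₀
  have hX := hsys.hasSum_weighted_infected (fun j => (hγ j).1) hnn hSinf β
  have hSinf_eq : Sinf = S 0 * exp (-(A - c * Sinf)) :=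
    tendsto_nhds_unique hSinf (hsys.tendsto_mul_exp hX)
  have hXpos : 0 < A - c * Sinf := hX.tsum_eq ▸ hX.summable.tsum_pos
    (fun t => sum_nonneg fun j _ => mul_nonneg (hβ j) ((hnn t).2 j)) _
    (hsys.sum_mul_pos_of_le (fun j => Set.Ioo_subset_Ioc_self (hγ j)) (fun t => (hnn t).2) hβ
      hβn hk hk_last)
  have hw : ∀ j, 0 ≤ β j / γ j := fun j => div_nonneg (hβ j) (hγ j).1.le
  have hcA : c * S 0 < A := sum_mul_lt_sum_mul_add _ hw (fun j => sum_nonneg fun i _ => hI₀ i)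
    (div_pos hβn (hγ last).1) (hk.trans_le (single_le_sum (fun i _ => hI₀ i) (mem_Iic.2 hk_last)))
  have hSinf_mem : Sinf ∈ Set.Ioo 0 (S 0) := by
    rw [hSinf_eq]
    exact ⟨by positivity, mul_lt_of_lt_one_right hS₀ (exp_lt_one_iff.2 (by linarith))⟩
  have hlog : log (S 0 / Sinf) = A - c * Sinf := by
    conv_lhs => rw [hSinf_eq, div_mul_cancel_left₀ hS₀.ne', ← exp_neg, log_exp, neg_neg]
  have hR0c : ∀ y, R0 * y / N = c * y := fun y => by rw [hR0]; field_simp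
  simp only [hR0c]
  refine ⟨hSinf_mem, hlog, fun x hx hxe => eq_of_log_div_eq_sub_mul hcA hx hSinf_mem hxe hlog, ?_⟩
  have hc : 0 < c :=
    (div_pos hβn (hγ last).1).trans_le (single_le_sum (fun j _ => hw j) (mem_univ last))
  rw [hR0, div_mul_cancel_left₀ hN.ne', ← one_div, lt_div_iff₀' hc]
  exact mul_lt_one_of_log_div_eq hSinf_mem.1 hSinf_mem.2 hcA hlog
end

section
/- (Eventual unimodality when only the last class is infectious.) Suppose φ(I) = φ̂(Iₙ) with φ̂ satisfying Hypothesis (H) restricted to one variable and the additional bound φ̂(x) ≥ rₙx/(1+rₙx) for x ∈ (0,N], where rₙ = φ̂'(0). If t* ≥ 0 satisfies Z(t*+1) < Z(t*), then Z(t+1) ≤ Z(t) for all t ≥ t*. -/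
open Filter Topology

/-
Along the system, `Z(t+1) − Z(t) = φ̂(Iₙ(t)) S(t) − γₙ Iₙ(t)`. Concavity and `φ̂(0) = 0` give
`φ̂(x) ≤ rₙ x`, so `Z` does not increase at any time where `S ≤ γₙ / rₙ`. A decrease at `t*` means
`φ̂(x) S(t*) < γₙ x` for `x = Iₙ(t*)`, and the extra bound, i.e. `x / φ̂(x) ≤ 1 / rₙ + x`, turns this
into `S(t* + 1) = (1 − φ̂(x)) S(t*) ≤ γₙ / rₙ`; since `S` is nonincreasing the bound persists.
-/

open Set

theorem ConcaveOn.le_mul_of_hasDerivAt {f : ℝ → ℝ} {s : Set ℝ} {r y : ℝ}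
    (hf : ConcaveOn ℝ s f) (h0 : 0 ∈ s) (hy : y ∈ s) (hy0 : 0 ≤ y) (hf0 : f 0 = 0)
    (hf' : HasDerivAt f r 0) : f y ≤ r * y := by
  rcases hy0.eq_or_lt with rfl | hy0
  · simp [hf0]
  have hslope := hf.slope_le_of_hasDerivAt h0 hy hy0 hf'
  rw [slope_def_field, hf0, sub_zero, sub_zero, div_le_iff₀ hy0] at hslope
  exact hslope

theorem one_sub_mul_le_div_of_mul_le {r g x p s : ℝ} (hr : 0 < r) (hg : 0 ≤ g) (hx : 0 < x)
    (hp : p ≤ 1) (hlow : r * x / (1 + r * x) ≤ p) (h : p * s ≤ g * x) :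
    (1 - p) * s ≤ g / r := by
  have hd : 0 < 1 + r * x := by positivity
  have hp0 : 0 < p := lt_of_lt_of_le (by positivity) hlow
  rw [div_le_iff₀ hd] at hlow
  rw [le_div_iff₀ hr]
  refine le_of_mul_le_mul_right ?_ hp0
  calc (1 - p) * s * r * p = r * (1 - p) * (p * s) := by ring
    _ ≤ r * (1 - p) * (g * x) := by gcongr
    _ = g * (r * x * (1 - p)) := by ring
    _ ≤ g * p := by gcongr; linarith

theorem apply_mem_Icc_of_mem_stateSet {n : ℕ} {N : ℝ} {J : Fin n → ℝ} (hJ : J ∈ stateSet n N)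
    (j : Fin n) : J j ∈ Icc 0 N :=
  ⟨hJ.1 j, (Finset.single_le_sum (fun i _ => hJ.1 i) (Finset.mem_univ j)).trans hJ.2⟩

namespace SPSystem

section

variable {n : ℕ} {γ : Fin n → ℝ} {φ : (Fin n → ℝ) → ℝ} {S : ℕ → ℝ} {I : ℕ → Fin n → ℝ}

theorem susceptible_antitone (hsys : SPSystem γ φ S I) (hφ : ∀ t, 0 ≤ φ (I t))
    (hS : ∀ t, 0 ≤ S t) : Antitone S :=
  antitone_nat_of_succ_le fun t => by
    rw [hsys.1 t]
    nlinarith [hφ t, hS t]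

end

variable {m : ℕ} {γ : Fin (m + 1) → ℝ} {φ : (Fin (m + 1) → ℝ) → ℝ} {S : ℕ → ℝ}
  {I : ℕ → Fin (m + 1) → ℝ}

theorem first_class_succ (hsys : SPSystem γ φ S I) (t : ℕ) :
    I (t + 1) 0 = (1 - γ 0) * I t 0 + φ (I t) * S t :=
  hsys.2.1 t m.succ_pos

theorem next_class_succ (hsys : SPSystem γ φ S I) (t : ℕ) (j : Fin m) :
    I (t + 1) j.succ = (1 - γ j.succ) * I t j.succ + γ j.castSucc * I t j.castSucc :=
  hsys.2.2 t j.castSucc (Nat.succ_lt_succ j.isLt)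

theorem sum_succ (hsys : SPSystem γ φ S I) (t : ℕ) :
    ∑ j, I (t + 1) j = ∑ j, I t j - γ (Fin.last m) * I t (Fin.last m) + φ (I t) * S t := by
  have hout := Fin.sum_univ_succ fun j => γ j * I t j
  have hout' := Fin.sum_univ_castSucc fun j => γ j * I t j
  rw [Fin.sum_univ_succ, hsys.first_class_succ, Fin.sum_univ_succ fun j => I t j,
    Finset.sum_congr rfl fun j _ => hsys.next_class_succ t j]
  simp only [sub_mul, one_mul, Finset.sum_add_distrib, Finset.sum_sub_distrib]
  linarith

theorem nonneg_and_add_sum_le (hsys : SPSystem γ φ S I) {N : ℝ} (hγ : ∀ j, γ j ∈ Icc 0 1)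
    (hφ : ∀ J ∈ stateSet (m + 1) N, φ J ∈ Icc 0 1) (hic : AdmissibleIC N S I) (t : ℕ) :
    0 ≤ S t ∧ (∀ j, 0 ≤ I t j) ∧ S t + ∑ j, I t j ≤ N := by
  induction t with
  | zero => exact ⟨hic.1.le, hic.2.1, hic.2.2.2⟩
  | succ t ih =>
    obtain ⟨hS, hI, hsum⟩ := ih
    have hφt := hφ (I t) ⟨hI, by linarith⟩
    refine ⟨?_, fun j => ?_, ?_⟩
    · rw [hsys.1 t]
      exact mul_nonneg (by linarith [hφt.2]) hS
    · refine Fin.cases ?_ (fun j => ?_) j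
      · rw [hsys.first_class_succ]
        exact add_nonneg (mul_nonneg (sub_nonneg.2 (hγ 0).2) (hI 0)) (mul_nonneg hφt.1 hS)
      · rw [hsys.next_class_succ]
        exact add_nonneg (mul_nonneg (sub_nonneg.2 (hγ _).2) (hI _))
          (mul_nonneg (hγ _).1 (hI _))
    · rw [hsys.1 t, hsys.sum_succ]
      nlinarith [(hγ (Fin.last m)).1, hI (Fin.last m)]

theorem sum_succ_le_of_susceptible_le (hsys : SPSystem γ φ S I) {t : ℕ} {r : ℝ} (hr : 0 < r)
    (hx : 0 ≤ I t (Fin.last m)) (hS : 0 ≤ S t) (hφ : φ (I t) ≤ r * I t (Fin.last m))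
    (hSt : S t ≤ γ (Fin.last m) / r) : ∑ j, I (t + 1) j ≤ ∑ j, I t j := by
  rw [hsys.sum_succ]
  suffices φ (I t) * S t ≤ γ (Fin.last m) * I t (Fin.last m) by linarith
  calc φ (I t) * S t ≤ r * I t (Fin.last m) * (γ (Fin.last m) / r) := by gcongr
    _ = γ (Fin.last m) * I t (Fin.last m) := by field_simp

theorem susceptible_succ_le_of_sum_succ_lt (hsys : SPSystem γ φ S I) {t : ℕ} {r : ℝ}
    (hr : 0 < r) (hγ : 0 ≤ γ (Fin.last m)) (hS : 0 ≤ S t) (hφ : φ (I t) ∈ Icc 0 1)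
    (hlow : 0 < I t (Fin.last m) →
      r * I t (Fin.last m) / (1 + r * I t (Fin.last m)) ≤ φ (I t))
    (hdec : ∑ j, I (t + 1) j < ∑ j, I t j) : S (t + 1) ≤ γ (Fin.last m) / r := by
  have hlt : φ (I t) * S t < γ (Fin.last m) * I t (Fin.last m) := by
    linarith [hsys.sum_succ t]
  have hx : 0 < I t (Fin.last m) :=
    pos_of_mul_pos_right ((mul_nonneg hφ.1 hS).trans_lt hlt) hγ
  rw [hsys.1]
  exact one_sub_mul_le_div_of_mul_le hr hγ hx hφ.2 (hlow hx) hlt.le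

end SPSystem

theorem sp_eventual_unimodality_last_class_general
    (n : ℕ) (hn : 0 < n) (N : ℝ)
    (γ : Fin n → ℝ) (hγ : ∀ j, γ j ∈ Set.Ioo (0 : ℝ) 1)
    (φhat : ℝ → ℝ) (rn : ℝ) (hrn : 0 < rn)
    (hC2 : ContDiff ℝ 2 φhat) (hφ0 : φhat 0 = 0)
    (hrange : ∀ x ∈ Set.Icc (0 : ℝ) N, φhat x ∈ Set.Ico (0 : ℝ) 1)
    (hconc : ConcaveOn ℝ (Set.Icc 0 N) φhat)
    (hderiv : deriv φhat 0 = rn)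
    (hlow : ∀ x ∈ Set.Ioc (0 : ℝ) N, rn * x / (1 + rn * x) ≤ φhat x)
    (φ : (Fin n → ℝ) → ℝ)
    (hφ : φ = fun I => φhat (I ⟨n - 1, Nat.sub_lt hn Nat.one_pos⟩))
    (S : ℕ → ℝ) (I : ℕ → Fin n → ℝ)
    (hsys : SPSystem γ φ S I) (hic : AdmissibleIC N S I)
    (tstar : ℕ) (hdec : ∑ j, I (tstar + 1) j < ∑ j, I tstar j) :
    ∀ t ≥ tstar, ∑ j, I (t + 1) j ≤ ∑ j, I t j := by
  obtain ⟨m, rfl⟩ := Nat.exists_eq_succ_of_ne_zero hn.ne'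
  replace hφ : φ = fun J => φhat (J (Fin.last m)) := hφ
  subst hφ
  have hφrange : ∀ J ∈ stateSet (m + 1) N, φhat (J (Fin.last m)) ∈ Icc 0 1 := fun J hJ =>
    Ico_subset_Icc_self (hrange _ (apply_mem_Icc_of_mem_stateSet hJ _))
  have hinv := hsys.nonneg_and_add_sum_le (fun j => Ioo_subset_Icc_self (hγ j)) hφrange hic
  have hS t : 0 ≤ S t := (hinv t).1
  have hmem t : I t ∈ stateSet (m + 1) N := ⟨(hinv t).2.1, by linarith [hinv t]⟩
  have hx t : I t (Fin.last m) ∈ Icc 0 N := apply_mem_Icc_of_mem_stateSet (hmem t) _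
  have hSstar : S (tstar + 1) ≤ γ (Fin.last m) / rn :=
    hsys.susceptible_succ_le_of_sum_succ_lt hrn (hγ _).1.le (hS _) (hφrange _ (hmem _))
      (fun hpos => hlow _ ⟨hpos, (hx _).2⟩) hdec
  have hSanti := hsys.susceptible_antitone (fun t => (hφrange _ (hmem t)).1) hS
  have hderiv0 : HasDerivAt φhat rn 0 :=
    hderiv ▸ (hC2.differentiable (by norm_num) 0).hasDerivAt
  intro t ht
  rcases ht.eq_or_lt with rfl | ht
  · exact hdec.le
  refine hsys.sum_succ_le_of_susceptible_le hrn (hx t).1 (hS t) ?_ ((hSanti ht).trans hSstar)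
  exact hconc.le_mul_of_hasDerivAt ⟨le_rfl, (hx t).1.trans (hx t).2⟩ (hx t) (hx t).1 hφ0 hderiv0

/-- eventual unimodality when only the last class is infectious: with
`φ(I) = φ̂(Iₙ)`, `rₙ = φ̂'(0) > 0`, and the additional bound
`φ̂(x) ≥ rₙx/(1+rₙx)` on `(0,N]`, if `Z(t*+1) < Z(t*)` for some `t* ≥ 0`, then
`Z(t+1) ≤ Z(t)` for all `t ≥ t*`, where `Z(t) = ∑ⱼ Iⱼ(t)`. -/
theorem sp_eventual_unimodality_last_class
    (n : ℕ) (hn : 0 < n) (N : ℝ) (hN : 0 < N)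
    (γ : Fin n → ℝ) (hγ : ∀ j, γ j ∈ Set.Ioo (0 : ℝ) 1)
    (φhat : ℝ → ℝ) (rn : ℝ) (hrn : 0 < rn)
    (hC2 : ContDiff ℝ 2 φhat) (hφ0 : φhat 0 = 0)
    (hrange : ∀ x ∈ Set.Icc (0 : ℝ) N, φhat x ∈ Set.Ico (0 : ℝ) 1)
    (hmono : MonotoneOn φhat (Set.Icc 0 N))
    (hconc : ConcaveOn ℝ (Set.Icc 0 N) φhat)
    (hderiv : deriv φhat 0 = rn)
    (hlow : ∀ x ∈ Set.Ioc (0 : ℝ) N, rn * x / (1 + rn * x) ≤ φhat x)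
    (φ : (Fin n → ℝ) → ℝ)
    (hφ : φ = fun I => φhat (I ⟨n - 1, Nat.sub_lt hn Nat.one_pos⟩))
    (S : ℕ → ℝ) (I : ℕ → Fin n → ℝ)
    (hsys : SPSystem γ φ S I) (hic : AdmissibleIC N S I)
    (tstar : ℕ) (hdec : ∑ j, I (tstar + 1) j < ∑ j, I tstar j) :
    ∀ t ≥ tstar, ∑ j, I (t + 1) j ≤ ∑ j, I t j :=
  sp_eventual_unimodality_last_class_general n hn N γ hγ φhat rn hrn hC2 hφ0 hrange hconc hderiv
    hlow φ hφ S I hsys hic tstar hdec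
end
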